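/- For η(v,u,S) = C₃(ε(v,S) + u²/2) + H(S) with ε_vv > 0 and ε_vv·ε_SS − ε_vS² > 0 (thermodynamic stability), the Hessian D²η with respect to (v,u,S) is positive definite if and only if C₃ > 0 and H''(S) > −(C₃/ε_vv)(ε_vv·ε_SS − ε_vS²) for all (v,S). -/

import Mathlib

/-! Differentiating `η` twice along the coordinate directions (and using the symmetry of the
mixed partials of `ε`) gives the Hessian
`!![C εvv, 0, C εvS; 0, C, 0; C εvS, 0, C εSS + H'']`.
A symmetric matrix of this shape is positive definite iff `a > 0`, `c > 0` and `a d - b² > 0`,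
and with `C > 0`, `εvv > 0` the last condition reads
`C εvv (H'' + (C / εvv)(εvv εSS - εvS²)) > 0`. -/

open Matrix

noncomputable def hmat {n : ℕ} (η : (Fin n → ℝ) → ℝ) (u : Fin n → ℝ) :
    Matrix (Fin n) (Fin n) ℝ :=
  Matrix.of fun i j => fderiv ℝ (fun w => fderiv ℝ η w (Pi.single i 1)) u (Pi.single j 1)

theorem fderiv_fderiv_apply_comm {E F : Type*} [NormedAddCommGroup E] [NormedSpace ℝ E]
    [NormedAddCommGroup F] [NormedSpace ℝ F] {f : E → F} (hf : ContDiff ℝ 2 f) (x v w : E) :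
    fderiv ℝ (fun y => fderiv ℝ f y v) x w = fderiv ℝ (fun y => fderiv ℝ f y w) x v := by
  have hdf : DifferentiableAt ℝ (fderiv ℝ f) x :=
    (hf.fderiv_right (m := 1) le_rfl).differentiable one_ne_zero x
  have fderiv_apply_eq (v w : E) :
      fderiv ℝ (fun y => fderiv ℝ f y v) x w = fderiv ℝ (fderiv ℝ f) x w v := by
    rw [fderiv_clm_apply hdf (differentiableAt_const v)]
    simp
  rw [fderiv_apply_eq, fderiv_apply_eq, (hf.contDiffAt.isSymmSndFDerivAt (by simp)).eq]

theorem fderiv_apply_pair_add_add {n : ℕ} (i j k : Fin n) {g : ℝ × ℝ → ℝ} {q r : ℝ → ℝ}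
    {g' : ℝ × ℝ →L[ℝ] ℝ} {q' r' : ℝ} {u : Fin n → ℝ} (hg : HasFDerivAt g g' (u i, u k))
    (hq : HasDerivAt q q' (u j)) (hr : HasDerivAt r r' (u k)) (v : Fin n → ℝ) :
    fderiv ℝ (fun w : Fin n → ℝ => g (w i, w k) + q (w j) + r (w k)) u v
      = g' (v i, v k) + q' * v j + r' * v k := by
  let L : (Fin n → ℝ) →L[ℝ] ℝ × ℝ := (ContinuousLinearMap.proj i).prod (ContinuousLinearMap.proj k)
  have h : HasFDerivAt (fun w : Fin n → ℝ => g (w i, w k) + q (w j) + r (w k))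
      (g'.comp L + q' • ContinuousLinearMap.proj j + r' • ContinuousLinearMap.proj k) u :=
    ((hg.comp u L.hasFDerivAt).add (hq.comp_hasFDerivAt u (hasFDerivAt_apply j u))).add
      (hr.comp_hasFDerivAt u (hasFDerivAt_apply k u))
  rw [h.fderiv]
  simp [L]

section EulerEntropy

variable {ε : ℝ × ℝ → ℝ} {H : ℝ → ℝ} {C : ℝ} {η : (Fin 3 → ℝ) → ℝ}

theorem fderiv_entropy_apply (hε : Differentiable ℝ ε) (hH : Differentiable ℝ H)
    (hη : ∀ w, η w = C * (ε (w 0, w 2) + w 1 ^ 2 / 2) + H (w 2)) (w v : Fin 3 → ℝ) :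
    fderiv ℝ η w v = C * fderiv ℝ ε (w 0, w 2) (v 0, v 2) + C * w 1 * v 1 + deriv H (w 2) * v 2 := by
  have hsplit : η = fun w => (fun x => C * ε x) (w 0, w 2) + (fun t => C * (t ^ 2 / 2)) (w 1)
      + H (w 2) := funext fun w => by rw [hη]; ring
  have hq : HasDerivAt (fun t => C * (t ^ 2 / 2)) (C * w 1) (w 1) :=
    (((hasDerivAt_pow 2 (w 1)).div_const 2).const_mul C).congr_deriv (by ring)
  rw [hsplit, fderiv_apply_pair_add_add 0 1 2 ((hε _).hasFDerivAt.const_mul C) hq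
    (hH _).hasDerivAt]
  rfl

theorem fderiv_fderiv_entropy_apply (hε : ContDiff ℝ 2 ε) (hH : ContDiff ℝ 2 H)
    (hη : ∀ w, η w = C * (ε (w 0, w 2) + w 1 ^ 2 / 2) + H (w 2)) (u v v' : Fin 3 → ℝ) :
    fderiv ℝ (fun w => fderiv ℝ η w v) u v'
      = C * fderiv ℝ (fun y => fderiv ℝ ε y (v 0, v 2)) (u 0, u 2) (v' 0, v' 2)
        + C * v 1 * v' 1 + deriv (deriv H) (u 2) * v 2 * v' 2 := by
  have hsplit : (fun w => fderiv ℝ η w v) = fun w => (fun x => C * fderiv ℝ ε x (v 0, v 2))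
      (w 0, w 2) + (fun t => t * (C * v 1)) (w 1) + (fun t => deriv H t * v 2) (w 2) :=
    funext fun w => by
      rw [fderiv_entropy_apply (hε.differentiable two_ne_zero) (hH.differentiable two_ne_zero) hη]
      ring
  have hεv : Differentiable ℝ (fun y => fderiv ℝ ε y (v 0, v 2)) :=
    ((hε.fderiv_right (m := 1) le_rfl).clm_apply contDiff_const).differentiable one_ne_zero
  have hH' : Differentiable ℝ (deriv H) :=
    (hH.deriv' (n := 1)).differentiable one_ne_zero
  rw [hsplit, fderiv_apply_pair_add_add 0 1 2 ((hεv _).hasFDerivAt.const_mul C)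
    (hasDerivAt_mul_const _) ((hH' _).hasDerivAt.mul_const _)]
  simp only [FunLike.coe_smul, Pi.smul_apply, smul_eq_mul]

theorem hmat_entropy {εvv εvS εSS : ℝ × ℝ → ℝ}
    (hεvv : ∀ x, εvv x = fderiv ℝ (fun y => fderiv ℝ ε y (1, 0)) x (1, 0))
    (hεvS : ∀ x, εvS x = fderiv ℝ (fun y => fderiv ℝ ε y (1, 0)) x (0, 1))
    (hεSS : ∀ x, εSS x = fderiv ℝ (fun y => fderiv ℝ ε y (0, 1)) x (0, 1))
    (hε : ContDiff ℝ 2 ε) (hH : ContDiff ℝ 2 H)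
    (hη : ∀ w, η w = C * (ε (w 0, w 2) + w 1 ^ 2 / 2) + H (w 2)) (w : Fin 3 → ℝ) :
    hmat η w = !![C * εvv (w 0, w 2), 0, C * εvS (w 0, w 2);
                  0, C, 0;
                  C * εvS (w 0, w 2), 0, C * εSS (w 0, w 2) + deriv (deriv H) (w 2)] := by
  ext i j
  fin_cases i <;> fin_cases j <;>
    simp [hmat, fderiv_fderiv_entropy_apply hε hH hη, hεvv, hεvS, hεSS, Prod.mk_zero_zero,
      fderiv_fderiv_apply_comm hε _ (0, 1) (1, 0)]

end EulerEntropy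

theorem posDef_decoupled_middle_iff (a b c d : ℝ) :
    (!![a, 0, b; 0, c, 0; b, 0, d]).PosDef ↔ 0 < a ∧ 0 < c ∧ 0 < a * d - b ^ 2 := by
  have hquad (x : Fin 3 → ℝ) : star x ⬝ᵥ (!![a, 0, b; 0, c, 0; b, 0, d] *ᵥ x)
      = a * x 0 ^ 2 + c * x 1 ^ 2 + d * x 2 ^ 2 + 2 * b * x 0 * x 2 := by
    simp only [dotProduct, Pi.star_apply, star_trivial, mulVec, of_apply, cons_val', cons_val_fin_one,
      Fin.sum_univ_three, cons_val_zero, cons_val_one, cons_val, zero_mul, add_zero, zero_add]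
    ring
  rw [posDef_iff_dotProduct_mulVec]
  constructor
  · rintro ⟨-, hpos⟩
    replace hpos (x : Fin 3 → ℝ) (hx : x ≠ 0) := hquad x ▸ hpos hx
    have ha : 0 < a := by simpa using hpos ![1, 0, 0] (by simp)
    have hc : 0 < c := by simpa using hpos ![0, 1, 0] (by simp)
    have had : 0 < a * (a * d - b ^ 2) := by
      have h := hpos ![b, 0, -a] (by simp [ha.ne'])
      simp only [cons_val_zero, cons_val_one, cons_val_two, head_cons, tail_cons] at h
      linarith
    exact ⟨ha, hc, pos_of_mul_pos_right had ha.le⟩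
  · rintro ⟨ha, hc, hdet⟩
    refine ⟨by ext i j; fin_cases i <;> fin_cases j <;> rfl, fun x hx => ?_⟩
    rw [hquad]
    refine pos_of_mul_pos_right ?_ ha.le
    -- completing the square in `x 0`
    rw [show a * (a * x 0 ^ 2 + c * x 1 ^ 2 + d * x 2 ^ 2 + 2 * b * x 0 * x 2)
        = (a * x 0 + b * x 2) ^ 2 + (a * d - b ^ 2) * x 2 ^ 2 + a * c * x 1 ^ 2 by ring]
    have hac := mul_pos ha hc
    rcases eq_or_ne (x 2) 0 with h2 | h2
    · rcases eq_or_ne (x 1) 0 with h1 | h1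
      · have h0 : x 0 ≠ 0 := fun h0 => hx (by ext i; fin_cases i <;> simp [h0, h1, h2])
        rw [h1, h2]
        linarith [sq_pos_of_ne_zero (mul_ne_zero ha.ne' h0)]
      · nlinarith [sq_nonneg (a * x 0 + b * x 2), mul_pos hac (sq_pos_of_ne_zero h1)]
    · nlinarith [sq_nonneg (a * x 0 + b * x 2), mul_pos hdet (sq_pos_of_ne_zero h2), sq_nonneg (x 1)]

theorem mul_mul_add_sub_sq_pos_iff {C a b s h : ℝ} (hC : 0 < C) (ha : 0 < a) :
    0 < C * a * (C * s + h) - (C * b) ^ 2 ↔ -(C / a) * (a * s - b ^ 2) < h := by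
  rw [← sub_pos (b := -(C / a) * _), show C * a * (C * s + h) - (C * b) ^ 2
      = C * a * (h - -(C / a) * (a * s - b ^ 2)) by field_simp; ring]
  exact mul_pos_iff_of_pos_left (mul_pos hC ha)

theorem stmt16_general (ε : ℝ × ℝ → ℝ) (hε : ContDiff ℝ 3 ε)
    (H : ℝ → ℝ) (hH : ContDiff ℝ 2 H) (C3 : ℝ)
    (εvv εvS εSS : ℝ × ℝ → ℝ)
    (hεvv : ∀ x, εvv x = fderiv ℝ (fun y => fderiv ℝ ε y (1, 0)) x (1, 0))
    (hεvS : ∀ x, εvS x = fderiv ℝ (fun y => fderiv ℝ ε y (1, 0)) x (0, 1))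
    (hεSS : ∀ x, εSS x = fderiv ℝ (fun y => fderiv ℝ ε y (0, 1)) x (0, 1))
    (hstab1 : ∀ x, 0 < εvv x)
    (η : (Fin 3 → ℝ) → ℝ)
    (hηdef : ∀ w, η w = C3 * (ε (w 0, w 2) + (w 1) ^ 2 / 2) + H (w 2)) :
    (∀ w, (hmat η w).PosDef) ↔
      (0 < C3 ∧ ∀ v S : ℝ,
        deriv (deriv H) S >
          -(C3 / εvv (v, S)) * (εvv (v, S) * εSS (v, S) - (εvS (v, S)) ^ 2)) := by
  simp only [hmat_entropy hεvv hεvS hεSS (hε.of_le (by norm_num)) hH hηdef, posDef_decoupled_middle_iff]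
  constructor
  · intro hpos
    have hC : 0 < C3 := (hpos 0).2.1
    exact ⟨hC, fun v S => (mul_mul_add_sub_sq_pos_iff hC (hstab1 _)).1 (hpos ![v, 0, S]).2.2⟩
  · rintro ⟨hC, hH''⟩ w
    exact ⟨mul_pos hC (hstab1 _), hC, (mul_mul_add_sub_sq_pos_iff hC (hstab1 _)).2 (hH'' _ _)⟩

/-- Convexity criterion for Euler entropies: under thermodynamic stability,
`η(v,u,S) = C₃(ε + u²/2) + H(S)` has positive definite Hessian iff `C₃ > 0` and
`H''(S) > −(C₃/ε_vv)(ε_vv ε_SS − ε_vS²)` for all `(v,S)`. -/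
theorem stmt16 (ε : ℝ × ℝ → ℝ) (hε : ContDiff ℝ 3 ε)
    (H : ℝ → ℝ) (hH : ContDiff ℝ 2 H) (C3 : ℝ)
    (εvv εvS εSS : ℝ × ℝ → ℝ)
    (hεvv : ∀ x, εvv x = fderiv ℝ (fun y => fderiv ℝ ε y (1, 0)) x (1, 0))
    (hεvS : ∀ x, εvS x = fderiv ℝ (fun y => fderiv ℝ ε y (1, 0)) x (0, 1))
    (hεSS : ∀ x, εSS x = fderiv ℝ (fun y => fderiv ℝ ε y (0, 1)) x (0, 1))
    (hstab1 : ∀ x, 0 < εvv x)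
    (hstab2 : ∀ x, 0 < εvv x * εSS x - (εvS x) ^ 2)
    (η : (Fin 3 → ℝ) → ℝ)
    (hηdef : ∀ w, η w = C3 * (ε (w 0, w 2) + (w 1) ^ 2 / 2) + H (w 2)) :
    (∀ w, (hmat η w).PosDef) ↔
      (0 < C3 ∧ ∀ v S : ℝ,
        deriv (deriv H) S >
          -(C3 / εvv (v, S)) * (εvv (v, S) * εSS (v, S) - (εvS (v, S)) ^ 2)) :=
  stmt16_general ε hε H hH C3 εvv εvS εSS hεvv hεvS hεSS hstab1 η hηdef
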